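/- For every nonzero integer q there exists a two-sided arithmetic progression I(q) contained in I = {3^{l-1}(3k+1) : k ∈ ℤ, l ∈ ℕ, l ≥ 1} such that (I(q) + q) ∩ I = ∅. -/

import Mathlib

/-!
An integer lies in `I` exactly when its part prime to `3` is `≡ 1 (mod 3)`; since the exponent
of `3` in `3 ^ r * u` with `3 ∤ u` is determined, no `3 ^ r * (3 * t + 2)` lies in `I`.
Write `q = 3 ^ r * u` with `3 ∤ u`. If `u ≡ 1`, the progression `3 ^ r * (3 * j + 1)` is moved
by `q` into the numbers `3 ^ r * (… ≡ 2)`. If `u ≡ -1`, take instead the elements of `I` that are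
`≡ -q - 3 ^ (r + 1) (mod 3 ^ (r + 2))`; adding `q` lands on `3 ^ (r + 1) * (… ≡ 2)`.
-/

/-- The index set `I = {3^(l-1)(3k+1) : k ∈ ℤ, l ≥ 1}`. -/
def gaussianIndexSet : Set ℤ :=
  {n : ℤ | ∃ (k : ℤ) (l : ℕ), 1 ≤ l ∧ n = 3 ^ (l - 1) * (3 * k + 1)}

theorem exponent_eq_of_pow_mul_eq_pow_mul {M : Type*} [CommMonoidWithZero M]
    [IsLeftCancelMulZero M] {p a b : M} (hp : p ≠ 0) {r s : ℕ} (ha : ¬p ∣ a) (hb : ¬p ∣ b)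
    (h : p ^ r * a = p ^ s * b) : r = s := by
  wlog hrs : r ≤ s generalizing r s a b
  · exact (this hb ha h.symm (by omega)).symm
  obtain ⟨k, rfl⟩ := Nat.exists_eq_add_of_le hrs
  rw [pow_add, mul_assoc, mul_right_inj' (pow_ne_zero r hp)] at h
  cases k with
  | zero => rfl
  | succ k => exact (ha (h ▸ dvd_mul_of_dvd_left (dvd_pow_self p k.succ_ne_zero) b)).elim

theorem Int.exists_eq_pow_mul_and_not_dvd {p q : ℤ} (hp : p.natAbs ≠ 1) (hq : q ≠ 0) :
    ∃ (r : ℕ) (u : ℤ), q = p ^ r * u ∧ ¬p ∣ u :=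
  ⟨_, (Int.finiteMultiplicity_iff.2 ⟨hp, hq⟩).exists_eq_pow_mul_and_not_dvd⟩

theorem three_pow_mul_mem_gaussianIndexSet (r : ℕ) (t : ℤ) :
    3 ^ r * (3 * t + 1) ∈ gaussianIndexSet :=
  ⟨t, r + 1, by omega, rfl⟩

theorem three_pow_mul_notMem_gaussianIndexSet (r : ℕ) (t : ℤ) :
    3 ^ r * (3 * t + 2) ∉ gaussianIndexSet := by
  rintro ⟨k, l, -, h⟩
  rw [← exponent_eq_of_pow_mul_eq_pow_mul three_ne_zero (by omega) (by omega) h] at h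
  have := mul_left_cancel₀ (pow_ne_zero r three_ne_zero) h
  omega

theorem shifted_progression_avoids_index_set :
    ∀ q : ℤ, q ≠ 0 →
      ∃ a d : ℤ, d ≠ 0 ∧
        (∀ j : ℤ, a + j * d ∈ gaussianIndexSet) ∧
        (∀ j : ℤ, a + j * d + q ∉ gaussianIndexSet) := by
  intro q hq
  obtain ⟨r, u, rfl, hu⟩ := Int.exists_eq_pow_mul_and_not_dvd (p := 3) (by decide) hq
  obtain ⟨m, rfl | rfl⟩ : ∃ m, u = 3 * m + 1 ∨ u = 3 * m - 1 := ⟨(u + 1) / 3, by omega⟩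
  · refine ⟨3 ^ r, 3 ^ (r + 1), by positivity, fun j => ?_, fun j => ?_⟩
    · convert three_pow_mul_mem_gaussianIndexSet r j using 1; ring
    · convert three_pow_mul_notMem_gaussianIndexSet r (j + m) using 2; ring
  · refine ⟨3 ^ r * (3 * (-m - 1) + 1), 3 ^ (r + 2), by positivity, fun j => ?_, fun j => ?_⟩
    · convert three_pow_mul_mem_gaussianIndexSet r (3 * j - m - 1) using 1; ring
    · convert three_pow_mul_notMem_gaussianIndexSet (r + 1) (j - 1) using 2; ring
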